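/- In S = (IO∞(ℤ))ⁿ, if 𝔠 is a congruence with two distinct 𝔠-equivalent elements α and β, then there exists a non-identity idempotent ε ∈ S with ε 𝔠 𝕀 and D(𝕀,ε) = D(α,β). -/

import Mathlib

/-- A partial injective self-map of ℤ (encoded as a `PEquiv`) is monotone. -/
def PMono (f : ℤ ≃. ℤ) : Prop :=
  ∀ x y a b : ℤ, a ∈ f x → b ∈ f y → x ≤ y → a ≤ b

/-- Domain of a partial injective self-map of ℤ. -/
def PDom (f : ℤ ≃. ℤ) : Set ℤ := {x | (f x).isSome}

/-- Range of a partial injective self-map of ℤ. -/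
def PRan (f : ℤ ≃. ℤ) : Set ℤ := {y | (f.symm y).isSome}

/-- Membership in IO∞(ℤ): injective (built into `PEquiv`), monotone,
with cofinite domain and cofinite range. -/
def IOZ (f : ℤ ≃. ℤ) : Prop :=
  PMono f ∧ (PDom f)ᶜ.Finite ∧ (PRan f)ᶜ.Finite

/-- Idempotent element of IO∞(ℤ). -/
def IsIdem (ε : ℤ ≃. ℤ) : Prop := ε.trans ε = ε

/-- Membership in the direct power (IO∞(ℤ))ⁿ. -/
def IOZn (n : ℕ) (α : Fin n → ℤ ≃. ℤ) : Prop := ∀ i, IOZ (α i)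

/-- Coordinatewise composition on the direct power (α then β, as in the paper). -/
def mulN {n : ℕ} (α β : Fin n → ℤ ≃. ℤ) : Fin n → ℤ ≃. ℤ := fun i => (α i).trans (β i)

/-- The identity 𝕀 of (IO∞(ℤ))ⁿ. -/
def oneN (n : ℕ) : Fin n → ℤ ≃. ℤ := fun _ => PEquiv.refl ℤ

/-- εᵢ°: the tuple with ε in coordinate i and identities elsewhere. -/
def epsT {n : ℕ} (i : Fin n) (ε : ℤ ≃. ℤ) : Fin n → ℤ ≃. ℤ :=
  fun j => if j = i then ε else PEquiv.refl ℤ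

/-- A congruence on the semigroup (IO∞(ℤ))ⁿ (relative to the carrier `IOZn n`). -/
def IsCongOn (n : ℕ) (ρ : (Fin n → ℤ ≃. ℤ) → (Fin n → ℤ ≃. ℤ) → Prop) : Prop :=
  (∀ α, IOZn n α → ρ α α) ∧
  (∀ α β, IOZn n α → IOZn n β → ρ α β → ρ β α) ∧
  (∀ α β γ, IOZn n α → IOZn n β → IOZn n γ → ρ α β → ρ β γ → ρ α γ) ∧
  (∀ α β γ, IOZn n α → IOZn n β → IOZn n γ → ρ α β →
    ρ (mulN α γ) (mulN β γ) ∧ ρ (mulN γ α) (mulN γ β))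

/-- The congruence σ_[i]. -/
def sigmaI (n : ℕ) (i : Fin n) (α β : Fin n → ℤ ≃. ℤ) : Prop :=
  ∃ ε : ℤ ≃. ℤ, IOZ ε ∧ IsIdem ε ∧ mulN α (epsT i ε) = mulN β (epsT i ε)

/-- D(α,β): the set of coordinates where α and β differ. -/
def Dset {n : ℕ} (α β : Fin n → ℤ ≃. ℤ) : Set (Fin n) := {i | α i ≠ β i}

/-- Idempotent tuple. -/
def IsIdemN {n : ℕ} (ε : Fin n → ℤ ≃. ℤ) : Prop := ∀ i, (ε i).trans (ε i) = ε i

/-- σ_[i₁,…,i_k] for the set of indices t: α and β agree after right multiplication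
by a product ε°_{i₁}⋯ε°_{i_k} of idempotents supported on t. -/
def sigmaSet (n : ℕ) (t : Finset (Fin n)) (α β : Fin n → ℤ ≃. ℤ) : Prop :=
  ∃ ε : Fin n → ℤ ≃. ℤ, IOZn n ε ∧ IsIdemN ε ∧ (∀ i ∉ t, ε i = PEquiv.refl ℤ) ∧
    mulN α ε = mulN β ε

/-!
Where `αᵢ ≰ βᵢ`, pick `a ∈ αᵢ x` with `a ∉ βᵢ x`, and multiply `α 𝔠 β` on the right by the
idempotent `π` whose `i`-th coordinate removes the point `βᵢ x`: then `x` lies in the domain of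
`(απ)ᵢ` but not of `(βπ)ᵢ`. Multiplying `απ 𝔠 βπ` on the left by `u`, with `uᵢ` an order
isomorphism of ℤ onto the domain of `(απ)ᵢ`, and on the right by `(uαπ)⁻¹` turns the left side
into `𝕀`, because `uαπ` is total. This gives `𝕀 𝔠 γ` with `γᵢ = id` where `αᵢ = βᵢ` and `γᵢ` not
total where `αᵢ ≰ βᵢ`, and then `𝕀 𝔠 γγ⁻¹`, the partial identity on the domain of `γ`. Doing the
same with `α` and `β` exchanged and multiplying the two idempotents yields `ε`.
-/

open PEquiv Set

lemma PEquiv.trans_apply {α β γ : Type*} (f : α ≃. β) (g : β ≃. γ) (x : α) :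
    f.trans g x = (f x).bind g := rfl

lemma PEquiv.ofSet_trans_ofSet {α : Type*} (s t : Set α) [DecidablePred (· ∈ s)]
    [DecidablePred (· ∈ t)] [DecidablePred (· ∈ s ∩ t)] :
    (ofSet s).trans (ofSet t) = ofSet (s ∩ t) := by
  refine PEquiv.ext fun x => Option.ext fun y => ?_
  simp only [← Option.mem_def, mem_trans, mem_ofSet_iff, mem_inter_iff]
  constructor
  · rintro ⟨z, ⟨rfl, hz⟩, rfl, hy⟩
    exact ⟨rfl, hz, hy⟩
  · rintro ⟨rfl, hs, ht⟩
    exact ⟨y, ⟨rfl, hs⟩, rfl, ht⟩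

lemma PEquiv.trans_symm_trans {α β : Type*} (f : α ≃. β) : f.trans (f.symm.trans f) = f := by
  refine PEquiv.ext fun x => ?_
  cases h : f x with
  | none => simp [trans_apply, h]
  | some y => simp [trans_apply, h, (eq_some_iff f).2 h]

def Equiv.toPEquivSubtype {α β : Type*} {s : Set β} [DecidablePred (· ∈ s)] (e : α ≃ s) :
    α ≃. β where
  toFun x := some (e x)
  invFun y := if h : y ∈ s then some (e.symm ⟨y, h⟩) else none
  inv x y := by
    by_cases h : y ∈ s
    · simp only [h, dite_true, Option.some.injEq]
      rw [Equiv.symm_apply_eq, Subtype.ext_iff, eq_comm]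
    · simp only [h, dite_false, reduceCtorEq, false_iff, Option.some.injEq]
      exact fun hxy => h (hxy ▸ (e x).2)

@[simp]
lemma Equiv.toPEquivSubtype_apply {α β : Type*} {s : Set β} [DecidablePred (· ∈ s)] (e : α ≃ s)
    (x : α) : e.toPEquivSubtype x = some (e x : β) := rfl

@[simp]
lemma Equiv.toPEquivSubtype_symm_apply {α β : Type*} {s : Set β} [DecidablePred (· ∈ s)]
    (e : α ≃ s) (y : β) :
    e.toPEquivSubtype.symm y = if h : y ∈ s then some (e.symm ⟨y, h⟩) else none := rfl

lemma exists_mem_gt_of_finite_compl {s : Set ℤ} (hs : sᶜ.Finite) (x : ℤ) : ∃ y ∈ s, x < y := by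
  obtain ⟨y, hy, hys⟩ := ((Ioi_infinite x).sdiff hs).nonempty
  exact ⟨y, not_not.1 hys, hy⟩

lemma exists_mem_lt_of_finite_compl {s : Set ℤ} (hs : sᶜ.Finite) (x : ℤ) : ∃ y ∈ s, y < x := by
  obtain ⟨y, hy, hys⟩ := ((Iio_infinite x).sdiff hs).nonempty
  exact ⟨y, not_not.1 hys, hy⟩

noncomputable def orderIsoOfFiniteCompl {s : Set ℤ} (hs : sᶜ.Finite) : ℤ ≃o s := by
  classical
  have : Nonempty s := let ⟨y, hy, _⟩ := exists_mem_gt_of_finite_compl hs 0; ⟨⟨y, hy⟩⟩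
  have : NoMaxOrder s := ⟨fun x => let ⟨y, hy, hxy⟩ := exists_mem_gt_of_finite_compl hs x
    ⟨⟨y, hy⟩, hxy⟩⟩
  have : NoMinOrder s := ⟨fun x => let ⟨y, hy, hxy⟩ := exists_mem_lt_of_finite_compl hs x
    ⟨⟨y, hy⟩, hxy⟩⟩
  letI : SuccOrder s := LinearLocallyFiniteOrder.succOrder s
  letI : PredOrder s := LinearLocallyFiniteOrder.predOrder s
  exact orderIsoIntOfLinearSuccPredArch.symm

section IOZ

variable {f g : ℤ ≃. ℤ}

lemma PMono.symm (hf : PMono f) : PMono f.symm := by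
  intro x y a b ha hb hxy
  rw [mem_iff_mem] at ha hb
  by_contra! hba
  obtain rfl := le_antisymm hxy (hf b a y x hb ha hba.le)
  exact hba.ne (f.inj hb ha)

lemma PMono.trans (hf : PMono f) (hg : PMono g) : PMono (f.trans g) := by
  intro x y a b ha hb hxy
  obtain ⟨c, hfc, hgc⟩ := (mem_trans f g x a).1 ha
  obtain ⟨d, hfd, hgd⟩ := (mem_trans f g y b).1 hb
  exact hg c d a b hgc hgd (hf x y c d hfc hfd hxy)

lemma compl_pDom_trans_finite (hf : (PDom f)ᶜ.Finite) (hg : (PDom g)ᶜ.Finite) :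
    (PDom (f.trans g))ᶜ.Finite := by
  have hsub : (PDom (f.trans g))ᶜ ⊆ (PDom f)ᶜ ∪ (⇑f) ⁻¹' (some '' (PDom g)ᶜ) := by
    intro x hx
    cases hfx : f x with
    | none => simp [PDom, hfx]
    | some y =>
      refine Or.inr ⟨y, ?_, hfx.symm⟩
      simpa [PDom, trans_apply, hfx] using hx
  refine (hf.union (Finite.preimage ?_ (hg.image some))).subset hsub
  rintro x₁ ⟨y, -, hy⟩ x₂ - hx
  exact f.inj (a₂ := x₂) (b := y) hy.symm (hy.trans hx).symm

lemma IOZ.refl : IOZ (PEquiv.refl ℤ) :=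
  ⟨fun x y a b ha hb hxy => by simp_all [refl_apply], by simp [PDom, refl_apply],
    by simp [PRan, refl_apply]⟩

lemma IOZ.symm (hf : IOZ f) : IOZ f.symm :=
  ⟨hf.1.symm, hf.2.2, hf.2.1⟩

lemma IOZ.trans (hf : IOZ f) (hg : IOZ g) : IOZ (f.trans g) :=
  ⟨hf.1.trans hg.1, compl_pDom_trans_finite hf.2.1 hg.2.1,
    compl_pDom_trans_finite (f := g.symm) (g := f.symm) hg.2.2 hf.2.2⟩

lemma mem_pDom_trans {f g : ℤ ≃. ℤ} {x : ℤ} : x ∈ PDom (f.trans g) ↔ ∃ y ∈ f x, y ∈ PDom g := by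
  simp only [PDom, mem_ofPred_eq, trans_apply]
  cases f x <;> simp

lemma pDom_ofSet (s : Set ℤ) [DecidablePred (· ∈ s)] : PDom (ofSet s) = s := by
  ext x
  by_cases hx : x ∈ s <;> simp [PDom, ofSet, hx]

lemma IOZ.ofSet {s : Set ℤ} [DecidablePred (· ∈ s)] (hs : sᶜ.Finite) : IOZ (ofSet s) := by
  refine ⟨fun x y a b ha hb hxy => ?_, by rwa [pDom_ofSet], ?_⟩
  · rw [mem_ofSet_iff] at ha hb
    rwa [ha.1, hb.1]
  · rwa [PRan, ofSet_symm, ← PDom, pDom_ofSet]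

end IOZ

section Embedding

variable {s : Set ℤ} [DecidablePred (· ∈ s)]

lemma pRan_toPEquivSubtype (e : ℤ ≃ s) : PRan e.toPEquivSubtype = s := by
  ext y
  by_cases hy : y ∈ s <;> simp [PRan, hy]

lemma IOZ.toPEquivSubtype (e : ℤ ≃o s) (hs : sᶜ.Finite) : IOZ e.toEquiv.toPEquivSubtype := by
  refine ⟨fun x y a b ha hb hxy => ?_, by simp [PDom], ?_⟩
  · simp only [Equiv.toPEquivSubtype_apply, Option.mem_def, Option.some.injEq] at ha hb
    rw [← ha, ← hb]
    exact e.monotone hxy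
  · rwa [pRan_toPEquivSubtype]

end Embedding

section Tuples

variable {n : ℕ} {α β : Fin n → ℤ ≃. ℤ}

lemma IOZn.oneN : IOZn n (oneN n) := fun _ => IOZ.refl

lemma IOZn.mulN (hα : IOZn n α) (hβ : IOZn n β) : IOZn n (mulN α β) :=
  fun i => (hα i).trans (hβ i)

lemma IOZn.symm (hα : IOZn n α) : IOZn n fun i => (α i).symm :=
  fun i => (hα i).symm

@[simp]
lemma mulN_oneN (α : Fin n → ℤ ≃. ℤ) : mulN α (oneN n) = α :=
  funext fun i => trans_refl (α i)

@[simp]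
lemma oneN_mulN (α : Fin n → ℤ ≃. ℤ) : mulN (oneN n) α = α :=
  funext fun i => refl_trans (α i)

lemma mulN_assoc (α β γ : Fin n → ℤ ≃. ℤ) : mulN (mulN α β) γ = mulN α (mulN β γ) :=
  funext fun i => trans_assoc (α i) (β i) (γ i)

lemma mulN_mulN_symm_mulN (γ : Fin n → ℤ ≃. ℤ) :
    mulN γ (mulN (fun i => (γ i).symm) γ) = γ :=
  funext fun i => trans_symm_trans (γ i)

open Classical in
noncomputable def partialIdN (E : Fin n → Set ℤ) : Fin n → ℤ ≃. ℤ := fun i => ofSet (E i)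

lemma IOZn.partialIdN {E : Fin n → Set ℤ} (hE : ∀ i, (E i)ᶜ.Finite) : IOZn n (partialIdN E) := by
  classical
  exact fun i => IOZ.ofSet (hE i)

lemma pDom_partialIdN (E : Fin n → Set ℤ) (i : Fin n) : PDom (partialIdN E i) = E i := by
  classical
  exact pDom_ofSet (E i)

lemma mulN_partialIdN (E F : Fin n → Set ℤ) :
    mulN (partialIdN E) (partialIdN F) = partialIdN (E ⊓ F) := by
  classical
  funext i
  simp only [mulN, partialIdN, Pi.inf_apply, inf_eq_inter]
  convert ofSet_trans_ofSet (E i) (F i)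

lemma isIdemN_partialIdN (E : Fin n → Set ℤ) : IsIdemN (partialIdN E) :=
  fun i => by rw [← mulN, mulN_partialIdN, inf_idem]

lemma mulN_symm_eq_partialIdN (γ : Fin n → ℤ ≃. ℤ) :
    mulN γ (fun i => (γ i).symm) = partialIdN fun i => PDom (γ i) := by
  funext i
  rw [mulN, self_trans_symm, partialIdN]
  congr

lemma dset_oneN_partialIdN (E : Fin n → Set ℤ) :
    Dset (oneN n) (partialIdN E) = {i | E i ≠ univ} := by
  ext i
  simp [Dset, oneN, partialIdN, eq_comm (a := PEquiv.refl ℤ)]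

end Tuples

namespace IsCongOn

variable {n : ℕ} {ρ : (Fin n → ℤ ≃. ℤ) → (Fin n → ℤ ≃. ℤ) → Prop} (hρ : IsCongOn n ρ)
  {α β γ : Fin n → ℤ ≃. ℤ}
include hρ

lemma rel_symm (hα : IOZn n α) (hβ : IOZn n β) (h : ρ α β) : ρ β α :=
  hρ.2.1 α β hα hβ h

lemma rel_trans (hα : IOZn n α) (hβ : IOZn n β) (hγ : IOZn n γ) (h₁ : ρ α β) (h₂ : ρ β γ) :
    ρ α γ :=
  hρ.2.2.1 α β γ hα hβ hγ h₁ h₂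

lemma rel_mulN_right (hα : IOZn n α) (hβ : IOZn n β) (hγ : IOZn n γ) (h : ρ α β) :
    ρ (mulN α γ) (mulN β γ) :=
  (hρ.2.2.2 α β γ hα hβ hγ h).1

lemma rel_mulN_left (hα : IOZn n α) (hβ : IOZn n β) (hγ : IOZn n γ) (h : ρ α β) :
    ρ (mulN γ α) (mulN γ β) :=
  (hρ.2.2.2 α β γ hα hβ hγ h).2

lemma rel_oneN_mulN (hα : IOZn n α) (hβ : IOZn n β) (h₁ : ρ (oneN n) α) (h₂ : ρ (oneN n) β) :
    ρ (oneN n) (mulN α β) := by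
  have h : ρ β (mulN α β) := by
    simpa using hρ.rel_mulN_right IOZn.oneN hα hβ h₁
  exact hρ.rel_trans IOZn.oneN hβ (hα.mulN hβ) h₂ h

-- `γγ⁻¹ = γγ⁻¹·1 ρ γγ⁻¹γ = γ ρ 1`
lemma rel_oneN_partialIdN_pDom (hγ : IOZn n γ) (h : ρ (oneN n) γ) :
    ρ (oneN n) (partialIdN fun i => PDom (γ i)) := by
  rw [← mulN_symm_eq_partialIdN]
  have hγγ' : IOZn n (mulN γ fun i => (γ i).symm) := hγ.mulN hγ.symm
  have h' : ρ (mulN γ fun i => (γ i).symm) γ := by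
    have := hρ.rel_mulN_left IOZn.oneN hγ hγγ' h
    rwa [mulN_oneN, mulN_assoc, mulN_mulN_symm_mulN] at this
  exact hρ.rel_symm hγγ' IOZn.oneN
    (hρ.rel_trans hγγ' hγ IOZn.oneN h' (hρ.rel_symm IOZn.oneN hγ h))

lemma exists_rel_oneN_of_rel (hα : IOZn n α) (hβ : IOZn n β) (h : ρ α β) :
    ∃ γ, IOZn n γ ∧ ρ (oneN n) γ ∧ ∀ i, (α i = β i → γ i = PEquiv.refl ℤ) ∧
      (¬ PDom (α i) ⊆ PDom (β i) → PDom (γ i) ≠ univ) := by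
  classical
  set e : ∀ i, ℤ ≃o PDom (α i) := fun i => orderIsoOfFiniteCompl (hα i).2.1
  set u : Fin n → ℤ ≃. ℤ := fun i => (e i).toEquiv.toPEquivSubtype
  have hu : IOZn n u := fun i => IOZ.toPEquivSubtype (e i) (hα i).2.1
  set v : Fin n → ℤ ≃. ℤ := fun i => (mulN u α i).symm
  have hv : IOZn n v := (hu.mulN hα).symm
  have hone : mulN (mulN u α) v = oneN n := funext fun i =>
    trans_symm_eq_iff_forall_isSome.2 fun x => by
      simp only [mulN, u, trans_apply, Equiv.toPEquivSubtype_apply, Option.bind_some]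
      exact (e i x).2
  refine ⟨mulN (mulN u β) v, (hu.mulN hβ).mulN hv, ?_, fun i => ⟨fun hαβ => ?_, fun hsub => ?_⟩⟩
  · simpa [hone] using
      hρ.rel_mulN_right (hu.mulN hα) (hu.mulN hβ) hv (hρ.rel_mulN_left hα hβ hu h)
  · simpa [mulN, oneN, hαβ] using congrFun hone i
  · obtain ⟨x, hxα, hxβ⟩ := not_subset.1 hsub
    intro hγ
    have hz : (mulN (mulN u β) v i ((e i).toEquiv.symm ⟨x, hxα⟩)).isSome :=
      eq_univ_iff_forall.1 hγ _
    simp only [mulN, u, trans_apply, Equiv.toPEquivSubtype_apply, Equiv.apply_symm_apply,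
      Option.bind_some] at hz
    exact hxβ (Option.isSome_of_isSome_bind hz)

lemma exists_rel_oneN_partialIdN (hα : IOZn n α) (hβ : IOZn n β) (h : ρ α β) :
    ∃ E : Fin n → Set ℤ, (∀ i, (E i)ᶜ.Finite) ∧ ρ (oneN n) (partialIdN E) ∧
      ∀ i, (α i = β i → E i = univ) ∧ (¬ α i ≤ β i → E i ≠ univ) := by
  have hwit : ∀ i, ∃ x, ¬ α i ≤ β i → ∃ a ∈ α i x, a ∉ β i x := fun i => by
    by_cases hle : α i ≤ β i
    · exact ⟨0, absurd hle⟩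
    · obtain ⟨x, a, ha, hb⟩ := by simpa only [le_def, not_forall, exists_prop] using hle
      exact ⟨x, fun _ => ⟨a, ha, hb⟩⟩
  choose x hx using hwit
  set U : Fin n → Set ℤ := fun i => {z | z ∉ β i (x i)}
  have hU : ∀ i, (U i)ᶜ.Finite := fun i =>
    Subsingleton.finite fun a ha b hb => Option.mem_unique (not_not.1 ha) (not_not.1 hb)
  have hπ := IOZn.partialIdN hU
  obtain ⟨γ, hγ, hργ, hγE⟩ := hρ.exists_rel_oneN_of_rel (hα.mulN hπ) (hβ.mulN hπ)
    (hρ.rel_mulN_right hα hβ hπ h)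
  refine ⟨fun i => PDom (γ i), fun i => (hγ i).2.1, hρ.rel_oneN_partialIdN_pDom hγ hργ,
    fun i => ⟨fun hαβ => ?_, fun hle => (hγE i).2 fun hsub => ?_⟩⟩
  · show PDom (γ i) = univ
    rw [(hγE i).1 (by simp [mulN, hαβ])]
    simp [PDom, refl_apply]
  · obtain ⟨a, ha, haU⟩ := hx i hle
    obtain ⟨b, hb, hbU⟩ := mem_pDom_trans.1 (hsub (mem_pDom_trans.2
      ⟨a, ha, by rwa [pDom_partialIdN]⟩))
    rw [pDom_partialIdN] at hbU
    exact hbU hb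

end IsCongOn

/-- from distinct 𝔠-equivalent α, β one gets a non-identity idempotent ε
with 𝕀 𝔠 ε and D(𝕀,ε) = D(α,β). -/
theorem stmt14 (n : ℕ) (ρ : (Fin n → ℤ ≃. ℤ) → (Fin n → ℤ ≃. ℤ) → Prop)
    (hρ : IsCongOn n ρ) (α β : Fin n → ℤ ≃. ℤ) (hα : IOZn n α) (hβ : IOZn n β)
    (hab : ρ α β) (hne : α ≠ β) :
    ∃ ε : Fin n → ℤ ≃. ℤ, IOZn n ε ∧ IsIdemN ε ∧ ε ≠ oneN n ∧ ρ (oneN n) ε ∧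
      Dset (oneN n) ε = Dset α β := by
  obtain ⟨E₁, hE₁, hρ₁, hE₁αβ⟩ := hρ.exists_rel_oneN_partialIdN hα hβ hab
  obtain ⟨E₂, hE₂, hρ₂, hE₂βα⟩ := hρ.exists_rel_oneN_partialIdN hβ hα (hρ.rel_symm hα hβ hab)
  have hD : Dset (oneN n) (partialIdN (E₁ ⊓ E₂)) = Dset α β := by
    rw [dset_oneN_partialIdN]
    ext i
    simp only [Dset, mem_ofPred_eq, Pi.inf_apply, ne_eq, ← top_eq_univ, inf_eq_top_iff,
      not_and_or]
    refine ⟨?_, fun hαβ => ?_⟩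
    · rintro (h | h) hαβ
      exacts [h ((hE₁αβ i).1 hαβ), h ((hE₂βα i).1 hαβ.symm)]
    · by_cases hle : α i ≤ β i
      · exact Or.inr ((hE₂βα i).2 fun hge => hαβ (le_antisymm hle hge))
      · exact Or.inl ((hE₁αβ i).2 hle)
  have hε : partialIdN (E₁ ⊓ E₂) ≠ oneN n := fun h => by
    obtain ⟨i, hi⟩ := Function.ne_iff.1 hne
    have hi' : i ∈ Dset (oneN n) (partialIdN (E₁ ⊓ E₂)) := hD.symm ▸ hi
    exact hi' (by rw [h])
  refine ⟨partialIdN (E₁ ⊓ E₂), IOZn.partialIdN fun i => ?_, isIdemN_partialIdN _, hε, ?_, hD⟩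
  · simpa [compl_inter] using (hE₁ i).union (hE₂ i)
  · rw [← mulN_partialIdN]
    exact hρ.rel_oneN_mulN (IOZn.partialIdN hE₁) (IOZn.partialIdN hE₂) hρ₁ hρ₂
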